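/- Let A = F_q[T] and let P(x) = x^2 - c·x + μ·P^m with μ ∈ F_q^*, P irreducible of degree d, c ∈ A with c not divisible by P and deg c ≤ md/2. If θ is a root of P(x) in an algebraic closure of K = F_q(T), then θ is integral over A, θ is not a unit of the integral closure, the extension K(θ)/K has degree 2, and the infinite valuation satisfies v_∞(θ) = -md/2 (equivalently |θ|_∞ = q^{md/2}). -/

import Mathlib

open Polynomial IntermediateField

noncomputable section
set_option synthInstance.maxHeartbeats 1000000
set_option maxHeartbeats 1000000

variable (Fq : Type) [Field Fq] [Fintype Fq]

open scoped Classical in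
/-- The `∞`-absolute value on `K = F_q(T)`: `|r|_∞ = q^(deg num - deg den)`. -/
def absInfty (r : RatFunc Fq) : ℝ :=
  if r = 0 then 0 else (Fintype.card Fq : ℝ) ^ (r.intDegree)

instance : Algebra (Polynomial Fq) (AlgebraicClosure (RatFunc Fq)) :=
  ((algebraMap (RatFunc Fq) (AlgebraicClosure (RatFunc Fq))).comp
    (algebraMap (Polynomial Fq) (RatFunc Fq))).toAlgebra

/-! `θ` is a root of the monic `X² - cX + a` over `A`, `a = μPᵐ`, so it is integral. It does not
lie in `K`: otherwise it lies in the integrally closed `A`, and a root `s ∈ A` gives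
`s (c - s) = μPᵐ` with `P` dividing exactly one factor (as `P ∤ c`); that factor is then a unit
times `Pᵐ` and the other one is constant, so `deg c = md > md/2`. Hence `[K(θ) : K] = 2`.
If `θ⁻¹` were integral over `A`, its minimal polynomial `X² - (c/a)X + 1/a` over `K` would have
coefficients in `A`, making `a` a unit.
An absolute value `w` extending `|·|_∞` is at most `1` on `ℕ`, hence nonarchimedean. Both roots
`θ` and `c - θ` then have `w ≤ q^(md/2)`, since `|c|_∞ ≤ q^(md/2)` and `|a|_∞ = q^(md)`; as their
product is `a`, both equal `q^(md/2)`. -/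

theorem AbsoluteValue.isNonarchimedean_of_forall_natCast_le_one {F : Type*} [Field F]
    (v : AbsoluteValue F ℝ) (h : ∀ n : ℕ, v n ≤ 1) : IsNonarchimedean v := by
  let _ := v.toNormedField
  have := IsUltrametricDist.isUltrametricDist_of_forall_norm_natCast_le_one (R := F) h
  exact IsUltrametricDist.norm_add_le_max

section Quadratic

variable {R : Type*} [CommRing R] [Nontrivial R] {v : AbsoluteValue R ℝ} {x b a : R} {r : ℝ}

theorem IsNonarchimedean.abv_le_of_quadratic (hv : IsNonarchimedean v)
    (hx : x ^ 2 - b * x + a = 0) (hb : v b ≤ r) (ha : v a ≤ r ^ 2) : v x ≤ r := by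
  by_contra! hlt
  have hr : 0 ≤ r := (v.nonneg b).trans hb
  have hbx : v (b * x) < v x ^ 2 := by
    rw [map_mul, sq]; exact mul_lt_mul_of_pos_right (hb.trans_lt hlt) (hr.trans_lt hlt)
  have ha' : v (-a) < v x ^ 2 := by
    rw [map_neg_eq_map]; exact ha.trans_lt (pow_lt_pow_left₀ hlt hr two_ne_zero)
  have := calc v x ^ 2 = v (b * x + -a) := by rw [← map_pow]; congr 1; linear_combination hx
    _ ≤ max (v (b * x)) (v (-a)) := hv _ _
    _ < v x ^ 2 := max_lt hbx ha'
  exact this.false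

theorem IsNonarchimedean.abv_eq_of_quadratic (hv : IsNonarchimedean v)
    (hx : x ^ 2 - b * x + a = 0) (hb : v b ≤ r) (ha : v a = r ^ 2) : v x = r := by
  have hxr := hv.abv_le_of_quadratic hx hb ha.le
  -- the other root `b - x` obeys the same bound, and the two roots multiply to `a`
  have hyr := hv.abv_le_of_quadratic (x := b - x) (by linear_combination hx) hb ha.le
  have hprod : v x * v (b - x) = r ^ 2 := by
    rw [← map_mul, ← ha]; congr 1; linear_combination -hx
  nlinarith [v.nonneg x, v.nonneg (b - x)]

end Quadratic

theorem isUnit_of_mul_eq_mul_prime_pow {R : Type*} [CommRing R] [IsDomain R] {p s t u : R}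
    (hp : Prime p) (hu : IsUnit u) {m : ℕ} (h : s * t = u * p ^ m) (ht : ¬ p ∣ t) :
    IsUnit t := by
  obtain ⟨s', rfl⟩ : p ^ m ∣ s := hp.pow_dvd_of_dvd_mul_right m ht (h ▸ dvd_mul_left _ _)
  have hst : s' * t = u := mul_left_cancel₀ (pow_ne_zero m hp.ne_zero) (by linear_combination h)
  exact isUnit_of_mul_isUnit_right (hst ▸ hu)

theorem Polynomial.sq_sub_mul_add_C_mul_pow_ne_zero {F : Type*} [Field F] {P c : F[X]}
    (hP : Irreducible P) {m : ℕ} (hm : 0 < m) {μ : F} (hμ : μ ≠ 0) (hc : ¬ P ∣ c)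
    (hdeg : 2 * c.natDegree ≤ m * P.natDegree) (s : F[X]) :
    s ^ 2 - c * s + C μ * P ^ m ≠ 0 := by
  intro h
  have hmd : 0 < m * P.natDegree := Nat.mul_pos hm hP.natDegree_pos
  have hμP : C μ * P ^ m ≠ 0 := mul_ne_zero (C_ne_zero.mpr hμ) (pow_ne_zero m hP.ne_zero)
  have key : ∀ s t : F[X], s * t = C μ * P ^ m → s + t = c → P ∣ s → False := by
    intro s t hst hsum hPs
    have ht : ¬ P ∣ t := fun hPt => hc (hsum ▸ dvd_add hPs hPt)
    have hdt := natDegree_eq_zero_of_isUnit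
      (isUnit_of_mul_eq_mul_prime_pow hP.prime (isUnit_C.mpr hμ.isUnit) hst ht)
    have hds : s.natDegree = m * P.natDegree := by
      have := congrArg natDegree hst
      rw [natDegree_mul (left_ne_zero_of_mul (hst ▸ hμP)) (right_ne_zero_of_mul (hst ▸ hμP)),
        natDegree_C_mul hμ, natDegree_pow] at this
      omega
    have hdc : c.natDegree = m * P.natDegree := by
      rw [← hsum, natDegree_add_eq_left_of_natDegree_lt (by omega), hds]
    omega
  have hmul : s * (c - s) = C μ * P ^ m := by linear_combination -h
  rcases hP.prime.dvd_mul.mp (hmul ▸ dvd_mul_of_dvd_right (dvd_pow_self P hm.ne') _) with hs | hs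
  · exact key _ _ hmul (by ring) hs
  · exact key (c - s) s (by linear_combination hmul) (by ring) hs

theorem isIntegral_of_quadratic {A L : Type*} [CommRing A] [CommRing L] [Algebra A L]
    {x : L} {b a : A}
    (hx : x ^ 2 - algebraMap A L b * x + algebraMap A L a = 0) : IsIntegral A x := by
  refine ⟨X ^ 2 - C b * X + C a, by monicity!, ?_⟩
  simpa [eval₂_add] using hx

theorem minpoly_eq_of_quadratic {K L : Type*} [Field K] [Field L] [Algebra K L] {x : L} {b a : K}
    (hx : x ^ 2 - algebraMap K L b * x + algebraMap K L a = 0)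
    (hxK : x ∉ (algebraMap K L).range) : minpoly K x = X ^ 2 - C b * X + C a := by
  have hint := isIntegral_of_quadratic hx
  have hmonic : (X ^ 2 - C b * X + C a).Monic := by monicity!
  have hdeg : (X ^ 2 - C b * X + C a).natDegree = 2 := by compute_degree!
  have hdvd : minpoly K x ∣ X ^ 2 - C b * X + C a := minpoly.dvd K x (by simpa using hx)
  have hle := natDegree_le_of_dvd hdvd hmonic.ne_zero
  have hne : (minpoly K x).natDegree ≠ 1 := fun h => hxK (minpoly.natDegree_eq_one_iff.mp h)
  have hpos := minpoly.natDegree_pos hint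
  exact (eq_of_monic_of_dvd_of_natDegree_le (minpoly.monic hint) hmonic hdvd (by omega)).symm

section IntegrallyClosed

variable {A K L : Type*} [CommRing A] [IsIntegrallyClosed A] [Field K] [Algebra A K]
  [IsFractionRing A K] [Field L] [Algebra A L] [Algebra K L] [IsScalarTower A K L]

theorem notMem_range_of_quadratic {x : L} {b a : A}
    (hx : x ^ 2 - algebraMap A L b * x + algebraMap A L a = 0)
    (hroot : ∀ s : A, s ^ 2 - b * s + a ≠ 0) : x ∉ (algebraMap K L).range := by
  rintro ⟨r, rfl⟩
  have hr : IsIntegral A r := (isIntegral_algebraMap_iff (algebraMap K L).injective).mp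
    (isIntegral_of_quadratic hx)
  obtain ⟨s, rfl⟩ := IsIntegrallyClosed.isIntegral_iff.mp hr
  refine hroot s ((algebraMap K L).injective.comp (IsFractionRing.injective A K) ?_)
  simpa [← IsScalarTower.algebraMap_apply] using hx

theorem isUnit_of_quadratic_of_isUnit [IsDomain A] {x : L} {b a : A}
    (hx : x ^ 2 - algebraMap A L b * x + algebraMap A L a = 0)
    (hxK : x ∉ (algebraMap K L).range) (hmem : x ∈ integralClosure A L)
    (hunit : IsUnit (⟨x, hmem⟩ : integralClosure A L)) : IsUnit a := by
  obtain ⟨y, hxy⟩ := hunit.exists_right_inv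
  have hyx : (y : L) = x⁻¹ := eq_inv_of_mul_eq_one_right (congrArg Subtype.val hxy)
  set b' := algebraMap A K b
  set a' := algebraMap A K a
  have hx' : x ^ 2 - algebraMap K L b' * x + algebraMap K L a' = 0 := by
    simpa [b', a', ← IsScalarTower.algebraMap_apply] using hx
  have ha' : a' ≠ 0 := by
    rintro ha'
    rw [ha', map_zero, add_zero, sq, ← sub_mul, mul_eq_zero, sub_eq_zero] at hx'
    rcases hx' with hx' | hx'
    · exact hxK ⟨b', hx'.symm⟩
    · exact hxK ⟨0, by rw [hx', map_zero]⟩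
  have hx0 : x ≠ 0 := by rintro rfl; exact hxK ⟨0, map_zero _⟩
  have hy : (y : L) ^ 2 - algebraMap K L (b' / a') * y + algebraMap K L (1 / a') = 0 := by
    have : algebraMap K L a' ≠ 0 := (_root_.map_ne_zero _).mpr ha'
    rw [hyx, map_div₀, map_div₀, map_one]
    field_simp
    linear_combination hx'
  have hyK : (y : L) ∉ (algebraMap K L).range := by
    rintro ⟨r, hr⟩
    exact hxK ⟨r⁻¹, by rw [map_inv₀, hr, hyx, inv_inv]⟩
  have hcoeff : algebraMap A K ((minpoly A (y : L)).coeff 0) = 1 / a' := by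
    rw [← coeff_map, ← minpoly.isIntegrallyClosed_eq_field_fractions' K y.2,
      minpoly_eq_of_quadratic hy hyK]
    simp
  refine IsUnit.of_mul_eq_one ((minpoly A (y : L)).coeff 0) (IsFractionRing.injective A K ?_)
  rw [map_mul, hcoeff, map_one, mul_one_div_cancel ha']

end IntegrallyClosed

instance : @IsScalarTower (Polynomial Fq) (RatFunc Fq) (AlgebraicClosure (RatFunc Fq))
    Algebra.toSMul Algebra.toSMul Algebra.toSMul :=
  IsScalarTower.of_algebraMap_eq' rfl

section AbsInfty

variable {Fq}

theorem absInfty_algebraMap {p : Fq[X]} (hp : p ≠ 0) :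
    absInfty Fq (algebraMap Fq[X] (RatFunc Fq) p) = (Fintype.card Fq : ℝ) ^ p.natDegree := by
  rw [absInfty, if_neg ((map_ne_zero_iff _ (IsFractionRing.injective _ _)).mpr hp),
    RatFunc.intDegree_polynomial, zpow_natCast]

theorem absInfty_algebraMap_le (p : Fq[X]) :
    absInfty Fq (algebraMap Fq[X] (RatFunc Fq) p) ≤ (Fintype.card Fq : ℝ) ^ p.natDegree := by
  rcases eq_or_ne p 0 with rfl | hp
  · simp [absInfty]
  · exact (absInfty_algebraMap hp).le

theorem absInfty_natCast_le_one (n : ℕ) : absInfty Fq n ≤ 1 := by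
  simpa using absInfty_algebraMap_le (n : Fq[X])

theorem abv_gen_eq_sqrt_of_quadratic {θ : AlgebraicClosure (RatFunc Fq)} {b a : Fq[X]}
    (hθ : θ ^ 2 - algebraMap Fq[X] _ b * θ + algebraMap Fq[X] _ a = 0) (ha : a ≠ 0)
    (hdeg : 2 * b.natDegree ≤ a.natDegree) (w : AbsoluteValue (RatFunc Fq)⟮θ⟯ ℝ)
    (hw : ∀ x, w (algebraMap (RatFunc Fq) (RatFunc Fq)⟮θ⟯ x) = absInfty Fq x) :
    w (AdjoinSimple.gen (RatFunc Fq) θ) = √((Fintype.card Fq : ℝ) ^ a.natDegree) := by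
  have hna : IsNonarchimedean w := w.isNonarchimedean_of_forall_natCast_le_one fun n => by
    rw [← map_natCast (algebraMap (RatFunc Fq) (RatFunc Fq)⟮θ⟯), hw]
    exact absInfty_natCast_le_one n
  have hgen : AdjoinSimple.gen (RatFunc Fq) θ ^ 2
      - algebraMap (RatFunc Fq) _ (algebraMap Fq[X] _ b) * AdjoinSimple.gen (RatFunc Fq) θ
      + algebraMap (RatFunc Fq) _ (algebraMap Fq[X] _ a) = 0 := by
    apply (algebraMap (RatFunc Fq)⟮θ⟯ (AlgebraicClosure (RatFunc Fq))).injective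
    simp only [map_add, map_sub, map_mul, map_pow, map_zero, AdjoinSimple.algebraMap_gen,
      ← IsScalarTower.algebraMap_apply]
    exact hθ
  have hq : (1 : ℝ) ≤ Fintype.card Fq := mod_cast Fintype.card_pos
  refine hna.abv_eq_of_quadratic hgen ?_ ?_
  · refine (hw _).trans_le ((absInfty_algebraMap_le b).trans ?_)
    rw [Real.le_sqrt (by positivity) (by positivity), ← pow_mul]
    exact pow_le_pow_right₀ hq (by omega)
  · rw [hw, absInfty_algebraMap ha, Real.sq_sqrt (by positivity)]

end AbsInfty

theorem weil_root_properties
    (P : Polynomial Fq) (hP : Irreducible P)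
    (d m : ℕ) (hd : P.natDegree = d) (hm : 0 < m)
    (μ : Fqˣ) (c : Polynomial Fq) (hc : ¬ P ∣ c) (hdeg : 2 * c.natDegree ≤ m * d)
    (θ : AlgebraicClosure (RatFunc Fq))
    (hθ : θ ^ 2 - algebraMap (Polynomial Fq) _ c * θ
        + algebraMap (Polynomial Fq) _ ((μ : Fq) • P ^ m) = 0) :
    IsIntegral (Polynomial Fq) θ ∧
    (∀ hmem : θ ∈ integralClosure (Polynomial Fq) (AlgebraicClosure (RatFunc Fq)),
      ¬ IsUnit (⟨θ, hmem⟩ : integralClosure (Polynomial Fq) (AlgebraicClosure (RatFunc Fq)))) ∧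
    Module.finrank (RatFunc Fq) (IntermediateField.adjoin (RatFunc Fq) {θ}) = 2 ∧
    (∀ w : AbsoluteValue (IntermediateField.adjoin (RatFunc Fq) {θ}) ℝ,
      (∀ x : RatFunc Fq,
        w (algebraMap (RatFunc Fq) (IntermediateField.adjoin (RatFunc Fq) {θ}) x) = absInfty Fq x) →
      w (IntermediateField.AdjoinSimple.gen (RatFunc Fq) θ)
        = ((Fintype.card Fq : ℝ) ^ (m * d : ℕ)) ^ ((1 : ℝ) / 2)) := by
  have hθK : θ ∉ (algebraMap (RatFunc Fq) _).range := by
    refine notMem_range_of_quadratic hθ fun s => ?_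
    rw [smul_eq_C_mul]
    exact sq_sub_mul_add_C_mul_pow_ne_zero hP hm μ.ne_zero hc (hd ▸ hdeg) s
  have hθ' : θ ^ 2 - algebraMap (RatFunc Fq) _ (algebraMap Fq[X] _ c) * θ
      + algebraMap (RatFunc Fq) _ (algebraMap Fq[X] _ ((μ : Fq) • P ^ m)) = 0 := hθ
  have hdega : ((μ : Fq) • P ^ m).natDegree = m * d := by
    rw [smul_eq_C_mul, natDegree_C_mul μ.ne_zero, natDegree_pow, hd]
  refine ⟨isIntegral_of_quadratic hθ, fun hmem hunit => ?_, ?_, fun w hw => ?_⟩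
  · have hPm := isUnit_of_quadratic_of_isUnit (K := RatFunc Fq) hθ hθK hmem hunit
    rw [smul_eq_C_mul, IsUnit.mul_iff, isUnit_pow_iff hm.ne'] at hPm
    exact hP.not_isUnit hPm.2
  · rw [adjoin.finrank (Algebra.IsIntegral.isIntegral θ), minpoly_eq_of_quadratic hθ' hθK]
    compute_degree!
  · rw [← Real.sqrt_eq_rpow, ← hdega]
    exact abv_gen_eq_sqrt_of_quadratic hθ
      (smul_ne_zero μ.ne_zero (pow_ne_zero m hP.ne_zero)) (hdega ▸ hd ▸ hdeg) w hw

end
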